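/- Let f : ℝ → (0,∞) be of the form f = f_∥ · f_⊥ where (f_∥^{1/n₁})'' + (k₁/n₁) f_∥^{1/n₁} ≤ 0 and (f_⊥^{1/n₂})'' + (k₂/n₂) f_⊥^{1/n₂} ≤ 0, with n₁, n₂ > 0 and N = n₁ + n₂. Then for all a ≤ b with θ = b − a and all t ∈ [0,1]: f^{1/N}((1−t)a + tb) ≥ (σ_{k₁/n₁}^{(1−t)}(θ))^{n₁/N} (σ_{k₂/n₂}^{(1−t)}(θ))^{n₂/N} f^{1/N}(a) + (σ_{k₁/n₁}^{(t)}(θ))^{n₁/N} (σ_{k₂/n₂}^{(t)}(θ))^{n₂/N} f^{1/N}(b). -/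

import Mathlib

/-- The generalized sine function `sin_k`. -/
noncomputable def genSin (k t : ℝ) : ℝ :=
  if 0 < k then Real.sin (Real.sqrt k * t) / Real.sqrt k
  else if k < 0 then Real.sinh (Real.sqrt (-k) * t) / Real.sqrt (-k)
  else t

/-- The reduced distortion coefficient `σ_k^{(t)}(θ)` (finite branch). -/
noncomputable def sigmaR (k t θ : ℝ) : ℝ := genSin k (t * θ) / genSin k θ

/-- The generalized cosine. -/
noncomputable def genCos (k t : ℝ) : ℝ :=
  if 0 < k then Real.cos (Real.sqrt k * t)
  else if k < 0 then Real.cosh (Real.sqrt (-k) * t)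
  else 1

lemma genSin_zero (k : ℝ) : genSin k 0 = 0 := by
  unfold genSin; split_ifs <;> simp

lemma genCos_zero (k : ℝ) : genCos k 0 = 1 := by
  unfold genCos; split_ifs <;> simp

lemma genSin_hasDerivAt (k x : ℝ) : HasDerivAt (genSin k) (genCos k x) x := by
  rcases lt_trichotomy k 0 with hk | hk | hk
  · have hs : (0:ℝ) < Real.sqrt (-k) := Real.sqrt_pos.mpr (by linarith)
    have h1 : genSin k = fun t => Real.sinh (Real.sqrt (-k) * t) / Real.sqrt (-k) := by
      funext t; simp [genSin, hk, not_lt.mpr hk.le]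
    have h2 : genCos k x = Real.cosh (Real.sqrt (-k) * x) := by
      simp [genCos, hk, not_lt.mpr hk.le]
    rw [h1, h2]
    have := (((Real.hasDerivAt_sinh (Real.sqrt (-k) * x)).comp x
      ((hasDerivAt_id x).const_mul (Real.sqrt (-k))))).div_const (Real.sqrt (-k))
    refine this.congr_deriv ?_
    field_simp
  · subst hk
    have h1 : genSin 0 = fun t => t := by funext t; simp [genSin]
    have h2 : genCos 0 x = 1 := by simp [genCos]
    rw [h1, h2]; exact hasDerivAt_id x
  · have hs : (0:ℝ) < Real.sqrt k := Real.sqrt_pos.mpr hk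
    have h1 : genSin k = fun t => Real.sin (Real.sqrt k * t) / Real.sqrt k := by
      funext t; simp [genSin, hk]
    have h2 : genCos k x = Real.cos (Real.sqrt k * x) := by simp [genCos, hk]
    rw [h1, h2]
    have := (((Real.hasDerivAt_sin (Real.sqrt k * x)).comp x
      ((hasDerivAt_id x).const_mul (Real.sqrt k)))).div_const (Real.sqrt k)
    refine this.congr_deriv ?_
    field_simp

lemma genCos_hasDerivAt (k x : ℝ) : HasDerivAt (genCos k) (-k * genSin k x) x := by
  rcases lt_trichotomy k 0 with hk | hk | hk
  · have hs : (0:ℝ) < Real.sqrt (-k) := Real.sqrt_pos.mpr (by linarith)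
    have h1 : genCos k = fun t => Real.cosh (Real.sqrt (-k) * t) := by
      funext t; simp [genCos, hk, not_lt.mpr hk.le]
    have h2 : genSin k x = Real.sinh (Real.sqrt (-k) * x) / Real.sqrt (-k) := by
      simp [genSin, hk, not_lt.mpr hk.le]
    rw [h1, h2]
    have := (Real.hasDerivAt_cosh (Real.sqrt (-k) * x)).comp x
      ((hasDerivAt_id x).const_mul (Real.sqrt (-k)))
    refine this.congr_deriv ?_
    have hsq : Real.sqrt (-k) * Real.sqrt (-k) = -k := Real.mul_self_sqrt (by linarith)
    field_simp
    linear_combination (Real.sinh (Real.sqrt (-k) * x)) * hsq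
  · subst hk
    have h1 : genCos 0 = fun _ => (1:ℝ) := by funext t; simp [genCos]
    rw [h1]
    simpa using hasDerivAt_const x (1:ℝ)
  · have hs : (0:ℝ) < Real.sqrt k := Real.sqrt_pos.mpr hk
    have h1 : genCos k = fun t => Real.cos (Real.sqrt k * t) := by
      funext t; simp [genCos, hk]
    have h2 : genSin k x = Real.sin (Real.sqrt k * x) / Real.sqrt k := by simp [genSin, hk]
    rw [h1, h2]
    have := (Real.hasDerivAt_cos (Real.sqrt k * x)).comp x
      ((hasDerivAt_id x).const_mul (Real.sqrt k))
    refine this.congr_deriv ?_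
    have hsq : Real.sqrt k * Real.sqrt k = k := Real.mul_self_sqrt hk.le
    field_simp
    linear_combination (-Real.sin (Real.sqrt k * x)) * hsq

lemma genSin_add (k u v : ℝ) :
    genSin k (u + v) = genSin k u * genCos k v + genCos k u * genSin k v := by
  rcases lt_trichotomy k 0 with hk | hk | hk
  · have hs : (0:ℝ) < Real.sqrt (-k) := Real.sqrt_pos.mpr (by linarith)
    simp only [genSin, genCos, if_neg (not_lt.mpr hk.le), if_pos hk]
    rw [mul_add, Real.sinh_add]
    field_simp
  · subst hk; simp [genSin, genCos]
  · have hs : (0:ℝ) < Real.sqrt k := Real.sqrt_pos.mpr hk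
    simp only [genSin, genCos, if_pos hk]
    rw [mul_add, Real.sin_add]
    field_simp

lemma genSin_nonneg {k x : ℝ} (hx : 0 ≤ x) (h : k * x ^ 2 < Real.pi ^ 2) :
    0 ≤ genSin k x := by
  rcases lt_trichotomy k 0 with hk | hk | hk
  · have hs : (0:ℝ) < Real.sqrt (-k) := Real.sqrt_pos.mpr (by linarith)
    simp only [genSin, if_neg (not_lt.mpr hk.le), if_pos hk]
    exact div_nonneg (by simpa using Real.sinh_le_sinh.mpr (by positivity : (0:ℝ) ≤ Real.sqrt (-k) * x)) hs.le
  · subst hk; simpa [genSin] using hx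
  · have hs : (0:ℝ) < Real.sqrt k := Real.sqrt_pos.mpr hk
    simp only [genSin, if_pos hk]
    apply div_nonneg _ hs.le
    apply Real.sin_nonneg_of_nonneg_of_le_pi (by positivity)
    nlinarith [Real.sq_sqrt hk.le, Real.pi_pos, sq_nonneg (Real.sqrt k * x - Real.pi),
      sq_nonneg (Real.sqrt k * x + Real.pi)]

lemma genSin_pos {k x : ℝ} (hx : 0 < x) (h : k * x ^ 2 < Real.pi ^ 2) :
    0 < genSin k x := by
  rcases lt_trichotomy k 0 with hk | hk | hk
  · have hs : (0:ℝ) < Real.sqrt (-k) := Real.sqrt_pos.mpr (by linarith)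
    simp only [genSin, if_neg (not_lt.mpr hk.le), if_pos hk]
    exact div_pos (Real.sinh_pos_iff.mpr (by positivity)) hs
  · subst hk; simpa [genSin] using hx
  · have hs : (0:ℝ) < Real.sqrt k := Real.sqrt_pos.mpr hk
    simp only [genSin, if_pos hk]
    apply div_pos _ hs
    apply Real.sin_pos_of_pos_of_lt_pi (by positivity)
    nlinarith [Real.sq_sqrt hk.le, Real.pi_pos, sq_nonneg (Real.sqrt k * x - Real.pi),
      sq_nonneg (Real.sqrt k * x + Real.pi)]
lemma sq_cond {k x θ : ℝ} (h0 : 0 ≤ x) (hxθ : x ≤ θ) (h : k * θ ^ 2 < Real.pi ^ 2) :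
    k * x ^ 2 < Real.pi ^ 2 := by
  rcases le_or_gt k 0 with hk | hk
  · nlinarith [Real.pi_pos, sq_nonneg x]
  · have hx2 : x ^ 2 ≤ θ ^ 2 := by nlinarith
    nlinarith

lemma one_dim (g : ℝ → ℝ) (κ : ℝ) (hg : ContDiff ℝ 2 g) (hgpos : ∀ x, 0 < g x)
    (hineq : ∀ x, deriv (deriv g) x + κ * g x ≤ 0) (a b : ℝ) (hab : a ≤ b)
    (hθ : κ * (b - a) ^ 2 < Real.pi ^ 2) (t : ℝ) (ht0 : 0 ≤ t) (ht1 : t ≤ 1) :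
    sigmaR κ (1 - t) (b - a) * g a + sigmaR κ t (b - a) * g b ≤ g ((1 - t) * a + t * b) := by
  set θ := b - a with hθdef
  set c := (1 - t) * a + t * b with hcdef
  rcases eq_or_lt_of_le hab with rfl | hlt
  · have : θ = 0 := by simp [hθdef]
    simp only [sigmaR, this, genSin_zero, mul_zero, div_zero, zero_mul, add_zero]
    have : c = a := by simp [hcdef]; ring
    rw [this]
    exact (hgpos a).le
  have hθpos : 0 < θ := by simp [hθdef]; linarith
  have hca : c - a = t * θ := by simp [hcdef, hθdef]; ring
  have hbc : b - c = (1 - t) * θ := by simp [hcdef, hθdef]; ring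
  have hac : a ≤ c := by nlinarith
  have hcb : c ≤ b := by nlinarith
  have hsθ : 0 < genSin κ θ := genSin_pos hθpos hθ
  -- differentiability facts
  have hg1 : ContDiff ℝ 1 (deriv g) := by
    have h2 : ContDiff ℝ ((1 : WithTop ℕ∞) + 1) g := by
      rw [one_add_one_eq_two]; exact hg
    exact (contDiff_succ_iff_deriv.mp h2).2.2
  have hgd : Differentiable ℝ g := hg.differentiable (by norm_num)
  have hgd' : Differentiable ℝ (deriv g) := hg1.differentiable (by norm_num)
  -- the two Wronskians
  set W₁ : ℝ → ℝ := fun x => deriv g x * genSin κ (x - a) - g x * genCos κ (x - a) with hW₁def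
  set W₂ : ℝ → ℝ := fun x => deriv g x * genSin κ (b - x) + g x * genCos κ (b - x) with hW₂def
  have hs₁ : ∀ x : ℝ, HasDerivAt (fun y => genSin κ (y - a)) (genCos κ (x - a)) x := by
    intro x
    have := (genSin_hasDerivAt κ (x - a)).comp x ((hasDerivAt_id x).sub_const a)
    exact this.congr_deriv (by simp)
  have hc₁ : ∀ x : ℝ, HasDerivAt (fun y => genCos κ (y - a)) (-κ * genSin κ (x - a)) x := by
    intro x
    have := (genCos_hasDerivAt κ (x - a)).comp x ((hasDerivAt_id x).sub_const a)
    exact this.congr_deriv (by simp)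
  have hs₂ : ∀ x : ℝ, HasDerivAt (fun y => genSin κ (b - y)) (-genCos κ (b - x)) x := by
    intro x
    have := (genSin_hasDerivAt κ (b - x)).comp x ((hasDerivAt_const x b).sub (hasDerivAt_id x))
    exact this.congr_deriv (by simp)
  have hc₂ : ∀ x : ℝ, HasDerivAt (fun y => genCos κ (b - y)) (κ * genSin κ (b - x)) x := by
    intro x
    have := (genCos_hasDerivAt κ (b - x)).comp x ((hasDerivAt_const x b).sub (hasDerivAt_id x))
    exact this.congr_deriv (by ring)
  have hW₁ : ∀ x : ℝ, HasDerivAt W₁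
      ((deriv (deriv g) x + κ * g x) * genSin κ (x - a)) x := by
    intro x
    have h1 := ((hgd' x).hasDerivAt.mul (hs₁ x)).sub ((hgd x).hasDerivAt.mul (hc₁ x))
    exact h1.congr_deriv (by ring)
  have hW₂ : ∀ x : ℝ, HasDerivAt W₂
      ((deriv (deriv g) x + κ * g x) * genSin κ (b - x)) x := by
    intro x
    have h1 := ((hgd' x).hasDerivAt.mul (hs₂ x)).add ((hgd x).hasDerivAt.mul (hc₂ x))
    exact h1.congr_deriv (by ring)
  have hW₁anti : AntitoneOn W₁ (Set.Icc a b) := by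
    apply antitoneOn_of_deriv_nonpos (convex_Icc a b)
    · exact Continuous.continuousOn (by
        exact continuous_iff_continuousAt.mpr fun x => (hW₁ x).continuousAt)
    · exact fun x _ => (hW₁ x).differentiableAt.differentiableWithinAt
    · intro x hx
      rw [interior_Icc] at hx
      rw [(hW₁ x).deriv]
      apply mul_nonpos_of_nonpos_of_nonneg (hineq x)
      exact genSin_nonneg (by linarith [hx.1]) (sq_cond (by linarith [hx.1])
        (by linarith [hx.2]) hθ)
  have hW₂anti : AntitoneOn W₂ (Set.Icc a b) := by
    apply antitoneOn_of_deriv_nonpos (convex_Icc a b)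
    · exact Continuous.continuousOn (by
        exact continuous_iff_continuousAt.mpr fun x => (hW₂ x).continuousAt)
    · exact fun x _ => (hW₂ x).differentiableAt.differentiableWithinAt
    · intro x hx
      rw [interior_Icc] at hx
      rw [(hW₂ x).deriv]
      apply mul_nonpos_of_nonpos_of_nonneg (hineq x)
      exact genSin_nonneg (by linarith [hx.2]) (sq_cond (by linarith [hx.2])
        (by linarith [hx.1]) hθ)
  have hmemc : c ∈ Set.Icc a b := ⟨hac, hcb⟩
  have hA : W₁ c ≤ -g a := by
    have := hW₁anti (Set.left_mem_Icc.mpr hab) hmemc hac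
    simpa [hW₁def, genSin_zero, genCos_zero] using this
  have hB : g b ≤ W₂ c := by
    have := hW₂anti hmemc (Set.right_mem_Icc.mpr hab) hcb
    simpa [hW₂def, genSin_zero, genCos_zero] using this
  have hs1c : 0 ≤ genSin κ (c - a) :=
    genSin_nonneg (by linarith) (sq_cond (by linarith) (by linarith) hθ)
  have hs2c : 0 ≤ genSin κ (b - c) :=
    genSin_nonneg (by linarith) (sq_cond (by linarith) (by linarith) hθ)
  have hadd : genSin κ θ = genSin κ (c - a) * genCos κ (b - c)
      + genCos κ (c - a) * genSin κ (b - c) := by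
    have h := genSin_add κ (c - a) (b - c)
    have he : c - a + (b - c) = θ := by rw [hθdef]; ring
    rw [he] at h
    exact h
  have hexpand : g c * genSin κ θ = W₂ c * genSin κ (c - a) - W₁ c * genSin κ (b - c) := by
    rw [hadd]; simp only [hW₁def, hW₂def]; ring
  have h1 : W₁ c * genSin κ (b - c) ≤ -g a * genSin κ (b - c) :=
    mul_le_mul_of_nonneg_right hA hs2c
  have h2 : g b * genSin κ (c - a) ≤ W₂ c * genSin κ (c - a) :=
    mul_le_mul_of_nonneg_right hB hs1c
  have key : g a * genSin κ (b - c) + g b * genSin κ (c - a) ≤ g c * genSin κ θ := by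
    rw [hexpand]; linarith
  -- conclude
  unfold sigmaR
  rw [div_mul_eq_mul_div, div_mul_eq_mul_div, ← add_div, div_le_iff₀ hsθ]
  calc genSin κ ((1 - t) * θ) * g a + genSin κ (t * θ) * g b
      = g a * genSin κ (b - c) + g b * genSin κ (c - a) := by rw [hca, hbc]; ring
    _ ≤ g c * genSin κ θ := key
lemma holder2 {α β x₁ x₂ y₁ y₂ : ℝ} (hα : 0 < α) (hβ : 0 < β) (hαβ : α + β = 1)
    (hx₁ : 0 ≤ x₁) (hx₂ : 0 ≤ x₂) (hy₁ : 0 ≤ y₁) (hy₂ : 0 ≤ y₂) :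
    x₁ ^ α * x₂ ^ β + y₁ ^ α * y₂ ^ β ≤ (x₁ + y₁) ^ α * (x₂ + y₂) ^ β := by
  rcases eq_or_lt_of_le (by positivity : (0:ℝ) ≤ x₁ + y₁) with hX | hX
  · have hx : x₁ = 0 := by linarith
    have hy : y₁ = 0 := by linarith
    rw [hx, hy]
    simp [Real.zero_rpow hα.ne']
  rcases eq_or_lt_of_le (by positivity : (0:ℝ) ≤ x₂ + y₂) with hY | hY
  · have hx : x₂ = 0 := by linarith
    have hy : y₂ = 0 := by linarith
    rw [hx, hy]
    simp [Real.zero_rpow hβ.ne']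
  set X := x₁ + y₁
  set Y := x₂ + y₂
  have h1 : x₁ ^ α * x₂ ^ β ≤ X ^ α * Y ^ β * (α * (x₁ / X) + β * (x₂ / Y)) := by
    have := Real.geom_mean_le_arith_mean2_weighted hα.le hβ.le
      (div_nonneg hx₁ hX.le) (div_nonneg hx₂ hY.le) hαβ
    calc x₁ ^ α * x₂ ^ β
        = X ^ α * Y ^ β * ((x₁ / X) ^ α * (x₂ / Y) ^ β) := by
          rw [Real.div_rpow hx₁ hX.le, Real.div_rpow hx₂ hY.le]
          field_simp
      _ ≤ X ^ α * Y ^ β * (α * (x₁ / X) + β * (x₂ / Y)) := by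
          apply mul_le_mul_of_nonneg_left this (by positivity)
  have h2 : y₁ ^ α * y₂ ^ β ≤ X ^ α * Y ^ β * (α * (y₁ / X) + β * (y₂ / Y)) := by
    have := Real.geom_mean_le_arith_mean2_weighted hα.le hβ.le
      (div_nonneg hy₁ hX.le) (div_nonneg hy₂ hY.le) hαβ
    calc y₁ ^ α * y₂ ^ β
        = X ^ α * Y ^ β * ((y₁ / X) ^ α * (y₂ / Y) ^ β) := by
          rw [Real.div_rpow hy₁ hX.le, Real.div_rpow hy₂ hY.le]
          field_simp
      _ ≤ X ^ α * Y ^ β * (α * (y₁ / X) + β * (y₂ / Y)) := by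
          apply mul_le_mul_of_nonneg_left this (by positivity)
  have hsum : α * (x₁ / X) + β * (x₂ / Y) + (α * (y₁ / X) + β * (y₂ / Y)) = 1 := by
    field_simp
    linear_combination (x₁ * x₂ + x₁ * y₂ + x₂ * y₁ + y₁ * y₂) * hαβ
  calc x₁ ^ α * x₂ ^ β + y₁ ^ α * y₂ ^ β
      ≤ X ^ α * Y ^ β * (α * (x₁ / X) + β * (x₂ / Y) + (α * (y₁ / X) + β * (y₂ / Y))) := by
        rw [mul_add]; exact add_le_add h1 h2
    _ = X ^ α * Y ^ β := by rw [hsum, mul_one]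
lemma sigmaR_nonneg {k θ : ℝ} (s : ℝ) (hs0 : 0 ≤ s) (hs1 : s ≤ 1) (hθ : 0 ≤ θ)
    (h : k * θ ^ 2 < Real.pi ^ 2) : 0 ≤ sigmaR k s θ := by
  unfold sigmaR
  apply div_nonneg
  · exact genSin_nonneg (by positivity) (sq_cond (by positivity) (by nlinarith) h)
  · exact genSin_nonneg hθ h

/-- Mixed distortion inequality for a product `f = f_∥ · f_⊥` of two concavity-type
factors, with `N = n₁ + n₂`. -/
theorem mixed_distortion (fpar fperp : ℝ → ℝ) (k₁ k₂ n₁ n₂ : ℝ)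
    (hn₁ : 0 < n₁) (hn₂ : 0 < n₂)
    (hpar_pos : ∀ x, 0 < fpar x) (hperp_pos : ∀ x, 0 < fperp x)
    (hpar_smooth : ContDiff ℝ 2 fpar) (hperp_smooth : ContDiff ℝ 2 fperp)
    (hpar : ∀ x : ℝ, deriv (deriv (fun y => fpar y ^ (1 / n₁ : ℝ))) x
        + (k₁ / n₁) * fpar x ^ (1 / n₁ : ℝ) ≤ 0)
    (hperp : ∀ x : ℝ, deriv (deriv (fun y => fperp y ^ (1 / n₂ : ℝ))) x
        + (k₂ / n₂) * fperp x ^ (1 / n₂ : ℝ) ≤ 0) :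
    ∀ a b : ℝ, a ≤ b →
      (k₁ / n₁) * (b - a) ^ 2 < Real.pi ^ 2 →
      (k₂ / n₂) * (b - a) ^ 2 < Real.pi ^ 2 →
      ∀ t ∈ Set.Icc (0 : ℝ) 1,
        (fpar ((1 - t) * a + t * b) * fperp ((1 - t) * a + t * b)) ^ (1 / (n₁ + n₂) : ℝ) ≥
          sigmaR (k₁ / n₁) (1 - t) (b - a) ^ (n₁ / (n₁ + n₂) : ℝ)
            * sigmaR (k₂ / n₂) (1 - t) (b - a) ^ (n₂ / (n₁ + n₂) : ℝ)
            * (fpar a * fperp a) ^ (1 / (n₁ + n₂) : ℝ)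
          + sigmaR (k₁ / n₁) t (b - a) ^ (n₁ / (n₁ + n₂) : ℝ)
            * sigmaR (k₂ / n₂) t (b - a) ^ (n₂ / (n₁ + n₂) : ℝ)
            * (fpar b * fperp b) ^ (1 / (n₁ + n₂) : ℝ) := by
  intro a b hab hk₁ hk₂ t ht
  obtain ⟨ht0, ht1⟩ := ht
  set N := n₁ + n₂ with hN
  have hNpos : 0 < N := by positivity
  set α := n₁ / N with hα
  set β := n₂ / N with hβ
  have hαpos : 0 < α := by positivity
  have hβpos : 0 < β := by positivity
  have hαβ : α + β = 1 := by rw [hα, hβ, ← add_div, div_self hNpos.ne']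
  set g₁ : ℝ → ℝ := fun y => fpar y ^ (1 / n₁ : ℝ) with hg₁
  set g₂ : ℝ → ℝ := fun y => fperp y ^ (1 / n₂ : ℝ) with hg₂
  have hg₁pos : ∀ x, 0 < g₁ x := fun x => Real.rpow_pos_of_pos (hpar_pos x) _
  have hg₂pos : ∀ x, 0 < g₂ x := fun x => Real.rpow_pos_of_pos (hperp_pos x) _
  have hg₁smooth : ContDiff ℝ 2 g₁ := by
    rw [contDiff_iff_contDiffAt]
    exact fun x => (hpar_smooth.contDiffAt).rpow_const_of_ne (hpar_pos x).ne'
  have hg₂smooth : ContDiff ℝ 2 g₂ := by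
    rw [contDiff_iff_contDiffAt]
    exact fun x => (hperp_smooth.contDiffAt).rpow_const_of_ne (hperp_pos x).ne'
  set c := (1 - t) * a + t * b with hc
  set θ := b - a with hθ
  have hθ0 : 0 ≤ θ := sub_nonneg.mpr hab
  set A₁ := sigmaR (k₁ / n₁) (1 - t) θ with hA₁
  set A₂ := sigmaR (k₂ / n₂) (1 - t) θ with hA₂
  set B₁ := sigmaR (k₁ / n₁) t θ with hB₁
  set B₂ := sigmaR (k₂ / n₂) t θ with hB₂
  have hA₁0 : 0 ≤ A₁ := sigmaR_nonneg _ (by linarith) (by linarith) hθ0 hk₁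
  have hA₂0 : 0 ≤ A₂ := sigmaR_nonneg _ (by linarith) (by linarith) hθ0 hk₂
  have hB₁0 : 0 ≤ B₁ := sigmaR_nonneg _ ht0 ht1 hθ0 hk₁
  have hB₂0 : 0 ≤ B₂ := sigmaR_nonneg _ ht0 ht1 hθ0 hk₂
  have P1 : A₁ * g₁ a + B₁ * g₁ b ≤ g₁ c :=
    one_dim g₁ (k₁ / n₁) hg₁smooth hg₁pos hpar a b hab hk₁ t ht0 ht1
  have P2 : A₂ * g₂ a + B₂ * g₂ b ≤ g₂ c :=
    one_dim g₂ (k₂ / n₂) hg₂smooth hg₂pos hperp a b hab hk₂ t ht0 ht1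
  -- rewrite mixed powers
  have e1 : (1 / n₁) * α = 1 / N := by rw [hα]; field_simp
  have e2 : (1 / n₂) * β = 1 / N := by rw [hβ]; field_simp
  have hmix : ∀ x : ℝ, (fpar x * fperp x) ^ (1 / N : ℝ) = g₁ x ^ α * g₂ x ^ β := by
    intro x
    rw [Real.mul_rpow (hpar_pos x).le (hperp_pos x).le, hg₁, hg₂]
    rw [← Real.rpow_mul (hpar_pos x).le, ← Real.rpow_mul (hperp_pos x).le, e1, e2]
  rw [ge_iff_le, hmix a, hmix b, hmix c]
  calc A₁ ^ α * A₂ ^ β * (g₁ a ^ α * g₂ a ^ β) + B₁ ^ α * B₂ ^ β * (g₁ b ^ α * g₂ b ^ β)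
      = (A₁ * g₁ a) ^ α * (A₂ * g₂ a) ^ β + (B₁ * g₁ b) ^ α * (B₂ * g₂ b) ^ β := by
        rw [Real.mul_rpow hA₁0 (hg₁pos a).le, Real.mul_rpow hA₂0 (hg₂pos a).le,
          Real.mul_rpow hB₁0 (hg₁pos b).le, Real.mul_rpow hB₂0 (hg₂pos b).le]
        ring
    _ ≤ (A₁ * g₁ a + B₁ * g₁ b) ^ α * (A₂ * g₂ a + B₂ * g₂ b) ^ β :=
        holder2 hαpos hβpos hαβ (mul_nonneg hA₁0 (hg₁pos a).le)
          (mul_nonneg hA₂0 (hg₂pos a).le) (mul_nonneg hB₁0 (hg₁pos b).le)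
          (mul_nonneg hB₂0 (hg₂pos b).le)
    _ ≤ g₁ c ^ α * g₂ c ^ β := by
        have n1 : 0 ≤ A₁ * g₁ a + B₁ * g₁ b :=
          add_nonneg (mul_nonneg hA₁0 (hg₁pos a).le) (mul_nonneg hB₁0 (hg₁pos b).le)
        have n2 : 0 ≤ A₂ * g₂ a + B₂ * g₂ b :=
          add_nonneg (mul_nonneg hA₂0 (hg₂pos a).le) (mul_nonneg hB₂0 (hg₂pos b).le)
        exact mul_le_mul (Real.rpow_le_rpow n1 P1 hαpos.le)
          (Real.rpow_le_rpow n2 P2 hβpos.le) (Real.rpow_nonneg n2 β)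
          (Real.rpow_nonneg (hg₁pos c).le α)
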